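/- Cartan's formula for noncommutative calculus: for any double derivation Θ of an algebra R, the operators on the space of noncommutative differential forms satisfy d ∘ ι_Θ + ι_Θ ∘ d = L_Θ and d ∘ L_Θ = L_Θ ∘ d, where ι_Θ is the reduced contraction and L_Θ the reduced Lie derivative. -/
import Mathlib


open TensorProduct

namespace Stmt4

variable (k Ω : Type*) [Field k] [CharZero k] [Ring Ω] [Algebra k Ω]

/-- The Koszul-sign operator `u ⊗ v ↦ (-1)^{|u||v|} u ⊗ v` on `Ω ⊗ Ω`, written in terms of
the parity (sign) operator `P` as `½(1 + P⊗1 + 1⊗P - P⊗P)`. -/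
noncomputable def signOp (P : Ω →ₐ[k] Ω) : Ω ⊗[k] Ω →ₗ[k] Ω ⊗[k] Ω :=
  ((2 : k)⁻¹) • (LinearMap.id
    + TensorProduct.map P.toLinearMap LinearMap.id
    + TensorProduct.map LinearMap.id P.toLinearMap
    - TensorProduct.map P.toLinearMap P.toLinearMap)

/-- The flip-multiply map `°(u ⊗ v) = (-1)^{|u||v|} v * u` used to pass from contractions and
Lie derivatives to their reduced versions. -/
noncomputable def flipMul (P : Ω →ₐ[k] Ω) : Ω ⊗[k] Ω →ₗ[k] Ω :=
  (LinearMap.mul' k Ω).comp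
    ((TensorProduct.comm k Ω Ω).toLinearMap.comp (signOp k Ω P))

/-- The de Rham differential on `Ω ⊗ Ω`: `u ⊗ v ↦ du ⊗ v + (-1)^{|u|} u ⊗ dv`. -/
noncomputable def dTensor (P : Ω →ₐ[k] Ω) (d : Ω →ₗ[k] Ω) : Ω ⊗[k] Ω →ₗ[k] Ω ⊗[k] Ω :=
  LinearMap.rTensor Ω d + TensorProduct.map P.toLinearMap d


set_option linter.unusedSectionVars false
set_option maxHeartbeats 1000000

/-- `P ⊗ P` on the tensor square. -/
noncomputable def sg (P : Ω →ₐ[k] Ω) : Ω ⊗[k] Ω →ₗ[k] Ω ⊗[k] Ω :=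
  TensorProduct.map P.toLinearMap P.toLinearMap


section Aux

variable {k Ω}
variable (P : Ω →ₐ[k] Ω) (d : Ω →ₗ[k] Ω)

lemma sg_tmul (u v : Ω) : sg k Ω P (u ⊗ₜ[k] v) = P u ⊗ₜ[k] P v := rfl

lemma dTensor_tmul (u v : Ω) :
    dTensor k Ω P d (u ⊗ₜ[k] v) = d u ⊗ₜ[k] v + P u ⊗ₜ[k] d v := by
  simp [dTensor]

lemma flipMul_tmul (u v : Ω) :
    flipMul k Ω P (u ⊗ₜ[k] v)
      = (2:k)⁻¹ • (v * u + v * P u + P v * u - P v * P u) := by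
  simp only [flipMul, signOp, LinearMap.coe_comp, Function.comp_apply, LinearMap.smul_apply,
    LinearMap.sub_apply, LinearMap.add_apply, LinearMap.id_apply, TensorProduct.map_tmul,
    AlgHom.toLinearMap_apply, map_smul, map_sub, map_add, LinearEquiv.coe_coe,
    TensorProduct.comm_tmul, LinearMap.mul'_apply]

lemma sg_mul_e (t : Ω ⊗[k] Ω) (y : Ω) :
    sg k Ω P (t * ((1:Ω) ⊗ₜ[k] y)) = sg k Ω P t * ((1:Ω) ⊗ₜ[k] P y) := by
  induction t using TensorProduct.induction_on with
  | zero => simp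
  | tmul u v => simp [sg_tmul, Algebra.TensorProduct.tmul_mul_tmul, map_mul]
  | add s t hs ht => rw [add_mul, map_add, hs, ht, map_add, add_mul]

lemma sg_f_mul (t : Ω ⊗[k] Ω) (x : Ω) :
    sg k Ω P ((x ⊗ₜ[k] (1:Ω)) * t) = ((P x) ⊗ₜ[k] (1:Ω)) * sg k Ω P t := by
  induction t using TensorProduct.induction_on with
  | zero => simp
  | tmul u v => simp [sg_tmul, Algebra.TensorProduct.tmul_mul_tmul, map_mul]
  | add s t hs ht => rw [mul_add, map_add, hs, ht, map_add, mul_add]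

lemma dT_mul_e (hdDer : ∀ x y : Ω, d (x * y) = d x * y + P x * d y)
    (t : Ω ⊗[k] Ω) (y : Ω) :
    dTensor k Ω P d (t * ((1:Ω) ⊗ₜ[k] y))
      = dTensor k Ω P d t * ((1:Ω) ⊗ₜ[k] y) + sg k Ω P t * ((1:Ω) ⊗ₜ[k] d y) := by
  induction t using TensorProduct.induction_on with
  | zero => simp
  | tmul u v =>
      rw [Algebra.TensorProduct.tmul_mul_tmul, dTensor_tmul, dTensor_tmul, sg_tmul,
        Algebra.TensorProduct.tmul_mul_tmul, hdDer v y, tmul_add, add_mul,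
        Algebra.TensorProduct.tmul_mul_tmul, Algebra.TensorProduct.tmul_mul_tmul]
      simp only [mul_one]
      abel
  | add s t hs ht =>
      rw [add_mul, map_add, hs, ht, map_add, map_add, add_mul, add_mul]
      abel

lemma dT_f_mul (hdDer : ∀ x y : Ω, d (x * y) = d x * y + P x * d y)
    (t : Ω ⊗[k] Ω) (x : Ω) :
    dTensor k Ω P d ((x ⊗ₜ[k] (1:Ω)) * t)
      = ((d x) ⊗ₜ[k] (1:Ω)) * t + ((P x) ⊗ₜ[k] (1:Ω)) * dTensor k Ω P d t := by
  induction t using TensorProduct.induction_on with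
  | zero => simp
  | tmul u v =>
      rw [Algebra.TensorProduct.tmul_mul_tmul, dTensor_tmul, dTensor_tmul, mul_add,
        Algebra.TensorProduct.tmul_mul_tmul, Algebra.TensorProduct.tmul_mul_tmul,
        hdDer x u, add_tmul, map_mul]
      simp only [Algebra.TensorProduct.tmul_mul_tmul, one_mul, mul_one]
      abel
  | add s t hs ht =>
      rw [mul_add, map_add, hs, ht, map_add, mul_add, mul_add]
      abel

lemma flip_dT (hP2 : ∀ x, P (P x) = x)
    (hdDer : ∀ x y : Ω, d (x * y) = d x * y + P x * d y)
    (hPd : ∀ x, P (d x) = - d (P x)) (t : Ω ⊗[k] Ω) :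
    flipMul k Ω P (dTensor k Ω P d t) = d (flipMul k Ω P t) := by
  induction t using TensorProduct.induction_on with
  | zero => simp
  | tmul u v =>
      rw [dTensor_tmul, map_add, flipMul_tmul, flipMul_tmul, flipMul_tmul, map_smul,
        map_sub, map_add, map_add]
      rw [hdDer v u, hdDer v (P u), hdDer (P v) u, hdDer (P v) (P u)]
      rw [← smul_add]
      congr 1
      simp only [hPd, hP2, mul_neg, neg_mul]
      abel
  | add s t hs ht =>
      rw [map_add, map_add, hs, ht, map_add, map_add]

variable (A : Subalgebra k Ω) (Θ : A →ₗ[k] Ω ⊗[k] Ω) (L : Ω →ₗ[k] Ω ⊗[k] Ω)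

lemma seed (hPA : ∀ a ∈ A, P a = a)
    (hdDer : ∀ x y : Ω, d (x * y) = d x * y + P x * d y)
    (hLA : ∀ a : A, L (a : Ω) = Θ a)
    (hLd : ∀ a : A, L (d (a : Ω)) = dTensor k Ω P d (Θ a))
    (hLDer : ∀ x y : Ω, L (x * y) = L x * ((1 : Ω) ⊗ₜ[k] y) + (x ⊗ₜ[k] (1 : Ω)) * L y)
    (a b : A) :
    (sg k Ω P (Θ a) - Θ a) * ((1:Ω) ⊗ₜ[k] d (b : Ω)) = 0 := by
  have hab : ((a*b : A) : Ω) = (a:Ω)*(b:Ω) := rfl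
  have eqL : L (d ((a:Ω) * (b:Ω)))
      = dTensor k Ω P d (Θ a) * ((1:Ω) ⊗ₜ[k] (b:Ω))
        + ((d (a:Ω)) ⊗ₜ[k] (1:Ω)) * Θ b
        + Θ a * ((1:Ω) ⊗ₜ[k] d (b:Ω))
        + ((a:Ω) ⊗ₜ[k] (1:Ω)) * dTensor k Ω P d (Θ b) := by
    rw [hdDer, hPA (a:Ω) a.2, map_add, hLDer (d (a:Ω)) (b:Ω), hLDer (a:Ω) (d (b:Ω)),
      hLd a, hLd b, hLA a, hLA b]
    abel
  have eqR : dTensor k Ω P d (Θ (a*b))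
      = dTensor k Ω P d (Θ a) * ((1:Ω) ⊗ₜ[k] (b:Ω))
        + ((d (a:Ω)) ⊗ₜ[k] (1:Ω)) * Θ b
        + sg k Ω P (Θ a) * ((1:Ω) ⊗ₜ[k] d (b:Ω))
        + ((a:Ω) ⊗ₜ[k] (1:Ω)) * dTensor k Ω P d (Θ b) := by
    have hth : Θ (a*b) = Θ a * ((1:Ω) ⊗ₜ[k] (b:Ω)) + ((a:Ω) ⊗ₜ[k] (1:Ω)) * Θ b := by
      rw [← hLA (a*b), hab, hLDer (a:Ω) (b:Ω), hLA a, hLA b]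
    rw [hth, map_add, dT_mul_e P d hdDer, dT_f_mul P d hdDer, hPA (a:Ω) a.2]
    abel
  have h := hLd (a*b)
  rw [hab, eqL, eqR] at h
  have h2 : Θ a * ((1:Ω) ⊗ₜ[k] d (b:Ω)) = sg k Ω P (Θ a) * ((1:Ω) ⊗ₜ[k] d (b:Ω)) :=
    add_left_cancel (add_right_cancel h)
  rw [sub_mul, ← h2, sub_self]

lemma master (hP2 : ∀ x, P (P x) = x)
    (hPA : ∀ a ∈ A, P a = a)
    (hdDer : ∀ x y : Ω, d (x * y) = d x * y + P x * d y)
    (hPd : ∀ x, P (d x) = - d (P x))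
    (hdd : ∀ x, d (d x) = 0)
    (hLA : ∀ a : A, L (a : Ω) = Θ a)
    (hLd : ∀ a : A, L (d (a : Ω)) = dTensor k Ω P d (Θ a))
    (hLDer : ∀ x y : Ω, L (x * y) = L x * ((1 : Ω) ⊗ₜ[k] y) + (x ⊗ₜ[k] (1 : Ω)) * L y)
    (hgen : Algebra.adjoin k ((A : Set Ω) ∪ d '' (A : Set Ω)) = ⊤) :
    ∀ (m : Ω) (a b : A),
      (sg k Ω P (Θ a) - Θ a) * ((1:Ω) ⊗ₜ[k] (m * d (b : Ω))) = 0 := by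
  have d_one : d (1:Ω) = 0 := by
    have h := hdDer 1 1
    rw [mul_one, mul_one, map_one P, one_mul] at h
    exact (add_eq_left.mp h.symm)
  have hPd' : ∀ a : A, P (d (a:Ω)) = -(d (a:Ω)) := by
    intro a; rw [hPd, hPA (a:Ω) a.2]
  let Ann : Ω → Prop := fun w => ∀ a : A, (sg k Ω P (Θ a) - Θ a) * ((1:Ω) ⊗ₜ[k] w) = 0
  have ann_zero : Ann 0 := by intro a; simp
  have ann_add : ∀ {w₁ w₂}, Ann w₁ → Ann w₂ → Ann (w₁ + w₂) := by
    intro w₁ w₂ h1 h2 a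
    rw [tmul_add, mul_add, h1 a, h2 a, add_zero]
  have ann_neg : ∀ {w}, Ann w → Ann (-w) := by
    intro w h a
    rw [tmul_neg, mul_neg, h a, neg_zero]
  have ann_sub : ∀ {w₁ w₂}, Ann w₁ → Ann w₂ → Ann (w₁ - w₂) := by
    intro w₁ w₂ h1 h2
    rw [sub_eq_add_neg]; exact ann_add h1 (ann_neg h2)
  have ann_smul : ∀ (r : k) {w}, Ann w → Ann (r • w) := by
    intro r w h a
    rw [tmul_smul, mul_smul_comm, h a, smul_zero]
  have ann_mulr : ∀ {w} (z : Ω), Ann w → Ann (w * z) := by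
    intro w z h a
    have he : ((1:Ω) ⊗ₜ[k] (w*z)) = ((1:Ω) ⊗ₜ[k] w) * ((1:Ω) ⊗ₜ[k] z) := by
      rw [Algebra.TensorProduct.tmul_mul_tmul, one_mul]
    rw [he, ← mul_assoc, h a, zero_mul]
  have seed' : ∀ b : A, Ann (d (b:Ω)) := fun b a =>
    seed P d A Θ L hPA hdDer hLA hLd hLDer a b
  have keyid : ∀ (m : Ω) (c : A), m * d (c:Ω) = d (P m * (c:Ω)) - d (P m) * (c:Ω) := by
    intro m c
    rw [hdDer (P m) (c:Ω), hP2 m]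
    abel
  -- generator predicate, closed under P
  let SP : Ω → Prop := fun g => g ∈ A ∨ (∃ a : A, g = d (a:Ω)) ∨ (∃ a : A, g = -(d (a:Ω)))
  have PS : ∀ g, SP g → SP (P g) := by
    rintro g (hA | ⟨a, rfl⟩ | ⟨a, rfl⟩)
    · exact Or.inl (by rw [hPA g hA]; exact hA)
    · exact Or.inr (Or.inr ⟨a, hPd' a⟩)
    · refine Or.inr (Or.inl ⟨a, ?_⟩)
      rw [map_neg, hPd' a, neg_neg]
  have mapPS : ∀ (l : List Ω), (∀ g ∈ l, SP g) → ∀ g ∈ l.map P, SP g := by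
    intro l hl g hg
    rcases List.mem_map.mp hg with ⟨g0, hg0, rfl⟩
    exact PS g0 (hl g0 hg0)
  -- main double induction
  have LV : ∀ n : ℕ, ∀ l : List Ω, l.length ≤ n → (∀ g ∈ l, SP g) →
      ∀ b : A, Ann (l.prod * d (b:Ω)) := by
    intro n
    induction n with
    | zero =>
        intro l hl _ b
        have : l = [] := List.eq_nil_of_length_eq_zero (Nat.le_zero.mp hl)
        subst this
        simpa using seed' b
    | succ n IH =>
        have LU : ∀ l : List Ω, l.length ≤ n + 1 → (∀ g ∈ l, SP g) → Ann (d l.prod) := by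
          intro l
          induction l using List.reverseRecOn with
          | nil => intro _ _; rw [List.prod_nil, d_one]; exact ann_zero
          | append_singleton l g IHl =>
              intro hlen hgS
              have hlen' : l.length ≤ n := by
                have := hlen; simp only [List.length_append, List.length_singleton] at this; omega
              have hgl : ∀ g' ∈ l, SP g' := fun g' hg' => hgS g' (List.mem_append_left _ hg')
              have hgg : SP g := hgS g (List.mem_append_right _ (List.mem_singleton_self g))
              rw [List.prod_append, List.prod_singleton, hdDer]
              refine ann_add (ann_mulr g (IHl (by omega) hgl)) ?_
              rcases hgg with hA | ⟨a', rfl⟩ | ⟨a', rfl⟩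
              · have hPe : P l.prod * d g = (l.map P).prod * d ((⟨g, hA⟩ : A) : Ω) := by
                  rw [map_list_prod]
                rw [hPe]
                exact IH (l.map P) (by simpa using hlen') (mapPS l hgl) ⟨g, hA⟩
              · rw [hdd, mul_zero]; exact ann_zero
              · rw [map_neg, hdd, neg_zero, mul_zero]; exact ann_zero
        intro l
        induction l using List.reverseRecOn with
        | nil => intro _ _ b; rw [List.prod_nil, one_mul]; exact seed' b
        | append_singleton l g IHl =>
            intro hlen hgS b
            have hlen' : l.length ≤ n := by
              have := hlen; simp only [List.length_append, List.length_singleton] at this; omega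
            have hgl : ∀ g' ∈ l, SP g' := fun g' hg' => hgS g' (List.mem_append_left _ hg')
            have hgg : SP g := hgS g (List.mem_append_right _ (List.mem_singleton_self g))
            rw [List.prod_append, List.prod_singleton]
            have dstep : ∀ a' : A, Ann (l.prod * d (a':Ω) * d (b:Ω)) := by
              intro a'
              rw [keyid l.prod a', sub_mul]
              refine ann_sub ?_ ?_
              · have hZ : P l.prod * (a':Ω) = ((l.map P) ++ [(a':Ω)]).prod := by
                  rw [List.prod_append, List.prod_singleton, map_list_prod]
                rw [hZ]
                refine ann_mulr _ (LU _ ?_ ?_)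
                · simp only [List.length_append, List.length_singleton, List.length_map]; omega
                · intro g' hg'
                  rcases List.mem_append.mp hg' with h1 | h2
                  · exact mapPS l hgl g' h1
                  · rw [List.mem_singleton.mp h2]; exact Or.inl a'.2
              · rw [map_list_prod, mul_assoc]
                exact ann_mulr _ (LU (l.map P) (by simpa using Nat.le_succ_of_le hlen')
                  (mapPS l hgl))
            rcases hgg with hA | ⟨a', rfl⟩ | ⟨a', rfl⟩
            · -- g ∈ A
              have hgid : l.prod * g * d (b:Ω)
                  = l.prod * d (((⟨g, hA⟩ : A) * b : A):Ω)
                    - l.prod * d ((⟨g, hA⟩ : A):Ω) * (b:Ω) := by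
                have h1 : g * d (b:Ω) = d (g * (b:Ω)) - d g * (b:Ω) := by
                  have := keyid g b
                  rwa [hPA g hA] at this
                have hco : ((((⟨g, hA⟩ : A) * b : A)) : Ω) = g * (b:Ω) := rfl
                rw [mul_assoc, h1, mul_sub, hco, mul_assoc]
              rw [hgid]
              exact ann_sub (IH l hlen' hgl _) (ann_mulr _ (IH l hlen' hgl _))
            · exact dstep a'
            · rw [mul_neg, neg_mul]
              exact ann_neg (dstep a')
  -- conclude by span induction
  intro m a b
  have hmem : m ∈ Submodule.span k
      ((Submonoid.closure ((A : Set Ω) ∪ d '' (A : Set Ω)) : Submonoid Ω) : Set Ω) := by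
    have h0 : m ∈ Algebra.adjoin k ((A : Set Ω) ∪ d '' (A : Set Ω)) := by
      rw [hgen]; exact Algebra.mem_top
    have h1 : m ∈ Subalgebra.toSubmodule (Algebra.adjoin k ((A : Set Ω) ∪ d '' (A : Set Ω))) := h0
    rwa [Algebra.adjoin_eq_span] at h1
  have main : ∀ b : A, Ann (m * d (b:Ω)) := by
    refine Submodule.span_induction
      (p := fun (x : Ω) _ => ∀ b : A, Ann (x * d (b:Ω))) ?_ ?_ ?_ ?_ hmem
    · intro x hx b
      rcases Submonoid.exists_list_of_mem_closure hx with ⟨l, hl, rfl⟩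
      refine LV l.length l le_rfl ?_ b
      intro g hg
      rcases hl g hg with hA | ⟨x0, hx0, rfl⟩
      · exact Or.inl hA
      · exact Or.inr (Or.inl ⟨⟨x0, hx0⟩, rfl⟩)
    · intro b; rw [zero_mul]; exact ann_zero
    · intro x y _ _ hx hy b; rw [add_mul]; exact ann_add (hx b) (hy b)
    · intro r x _ hx b; rw [smul_mul_assoc]; exact ann_smul r (hx b)
  exact main b a

end Aux

/-- **Cartan's formula for noncommutative calculus.**  Let `Ω = Ω•R` be the
algebra of noncommutative differential forms of an algebra `R = A` (a subalgebra of even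
forms generating `Ω` together with `d(A)`), with parity operator `P`, de Rham differential
`d` (odd derivation, `d² = 0`), and let `Θ` be a double derivation of `R`.  Let
`i = i_Θ` be the contraction (the odd double derivation of `Ω` with `i(a) = 0` and
`i(da) = Θ(a)` for `a ∈ R`) and `L = L_Θ` the Lie derivative (the even double derivation with
`L(a) = Θ(a)` and `L(da) = (d ⊗ 1 + (-1)^{|·|} ⊗ d)(Θ(a))`).  Then the reduced operators
`ι_Θ = ° ∘ i` and `𝓛_Θ = ° ∘ L` satisfy
`d ∘ ι_Θ + ι_Θ ∘ d = 𝓛_Θ` and `d ∘ 𝓛_Θ = 𝓛_Θ ∘ d`. -/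
theorem stmt4 (A : Subalgebra k Ω) (P : Ω →ₐ[k] Ω) (d : Ω →ₗ[k] Ω)
    (Θ : A →ₗ[k] Ω ⊗[k] Ω)
    (i L : Ω →ₗ[k] Ω ⊗[k] Ω)
    (hP2 : ∀ x, P (P x) = x)
    (hPA : ∀ a ∈ A, P a = a)
    (hdDer : ∀ x y : Ω, d (x * y) = d x * y + P x * d y)
    (hPd : ∀ x, P (d x) = - d (P x))
    (hdd : ∀ x, d (d x) = 0)
    (hiA : ∀ a : A, i (a : Ω) = 0)
    (hid : ∀ a : A, i (d (a : Ω)) = Θ a)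
    (hiDer : ∀ x y : Ω,
      i (x * y) = i x * ((1 : Ω) ⊗ₜ[k] y) + ((P x) ⊗ₜ[k] (1 : Ω)) * i y)
    (hLA : ∀ a : A, L (a : Ω) = Θ a)
    (hLd : ∀ a : A, L (d (a : Ω)) = dTensor k Ω P d (Θ a))
    (hLDer : ∀ x y : Ω,
      L (x * y) = L x * ((1 : Ω) ⊗ₜ[k] y) + (x ⊗ₜ[k] (1 : Ω)) * L y)
    (hgen : Algebra.adjoin k ((A : Set Ω) ∪ d '' (A : Set Ω)) = ⊤) :
    d.comp ((flipMul k Ω P).comp i) + ((flipMul k Ω P).comp i).comp d =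
        (flipMul k Ω P).comp L ∧
      d.comp ((flipMul k Ω P).comp L) = ((flipMul k Ω P).comp L).comp d := by
  have hmaster := master P d A Θ L hP2 hPA hdDer hPd hdd hLA hLd hLDer hgen
  have d_one : d (1:Ω) = 0 := by
    have h := hdDer 1 1
    rw [mul_one, mul_one, map_one P, one_mul] at h
    exact (add_eq_left.mp h.symm)
  have d_alg : ∀ r : k, d (algebraMap k Ω r) = 0 := by
    intro r; rw [Algebra.algebraMap_eq_smul_one, map_smul, d_one, smul_zero]
  have i_one : i (1:Ω) = 0 := by
    have h := hiDer 1 1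
    rw [mul_one, map_one P, ← Algebra.TensorProduct.one_def, mul_one, one_mul] at h
    exact (add_eq_left.mp h.symm)
  have i_alg : ∀ r : k, i (algebraMap k Ω r) = 0 := by
    intro r; rw [Algebra.algebraMap_eq_smul_one, map_smul, i_one, smul_zero]
  have L_one : L (1:Ω) = 0 := by
    have h := hLDer 1 1
    rw [mul_one, ← Algebra.TensorProduct.one_def, mul_one, one_mul] at h
    exact (add_eq_left.mp h.symm)
  have L_alg : ∀ r : k, L (algebraMap k Ω r) = 0 := by
    intro r; rw [Algebra.algebraMap_eq_smul_one, map_smul, L_one, smul_zero]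
  have hPda : ∀ a : A, P (d (a:Ω)) = -(d (a:Ω)) := by
    intro a; rw [hPd, hPA (a:Ω) a.2]
  have hmem : ∀ x : Ω, x ∈ Algebra.adjoin k ((A : Set Ω) ∪ d '' (A : Set Ω)) := by
    intro x; rw [hgen]; exact Algebra.mem_top
  have Krule : ∀ x y : Ω, i (P (x*y)) + sg k Ω P (i (x*y))
      = (i (P x) + sg k Ω P (i x)) * ((1:Ω) ⊗ₜ[k] P y)
        + (x ⊗ₜ[k] (1:Ω)) * (i (P y) + sg k Ω P (i y)) := by
    intro x y
    rw [map_mul, hiDer (P x) (P y), hiDer x y, map_add, sg_mul_e, sg_f_mul, hP2,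
      add_mul, mul_add]
    abel
  have KW : ∀ x (m : Ω) (b : A) (y' : Ω),
      (i (P x) + sg k Ω P (i x)) * ((1:Ω) ⊗ₜ[k] (m * d (b:Ω) * y')) = 0 := by
    intro x
    induction hmem x using Algebra.adjoin_induction with
    | mem g hg =>
        intro m b y'
        rcases hg with hA | ⟨x0, hx0, rfl⟩
        · have h1 : i (P g) = 0 := by
            rw [hPA g hA]; exact hiA ⟨g, hA⟩
          have h2 : i g = 0 := hiA ⟨g, hA⟩
          rw [h1, h2, map_zero, add_zero, zero_mul]
        · have h1 : i (P (d x0)) = - Θ ⟨x0, hx0⟩ := by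
            rw [show P (d x0) = -(d x0) from hPda ⟨x0, hx0⟩, map_neg,
              show i (d x0) = Θ ⟨x0, hx0⟩ from hid ⟨x0, hx0⟩]
          have h2 : sg k Ω P (i (d x0)) = sg k Ω P (Θ ⟨x0, hx0⟩) := by
            rw [show i (d x0) = Θ ⟨x0, hx0⟩ from hid ⟨x0, hx0⟩]
          rw [h1, h2, neg_add_eq_sub]
          have hsplit : ((1:Ω) ⊗ₜ[k] (m * d (b:Ω) * y'))
              = ((1:Ω) ⊗ₜ[k] (m * d (b:Ω))) * ((1:Ω) ⊗ₜ[k] y') := by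
            rw [Algebra.TensorProduct.tmul_mul_tmul, one_mul]
          rw [hsplit, ← mul_assoc, hmaster m ⟨x0, hx0⟩ b, zero_mul]
    | algebraMap r =>
        intro m b y'
        rw [AlgHom.commutes, i_alg r, map_zero, add_zero, zero_mul]
    | add x y _ _ ihx ihy =>
        intro m b y'
        rw [map_add P, map_add i, map_add i, map_add (sg k Ω P)]
        have : i (P x) + i (P y) + (sg k Ω P (i x) + sg k Ω P (i y))
            = (i (P x) + sg k Ω P (i x)) + (i (P y) + sg k Ω P (i y)) := by abel
        rw [this, add_mul, ihx m b y', ihy m b y', add_zero]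
    | mul x y _ _ ihx ihy =>
        intro m b y'
        rw [Krule x y, add_mul]
        have e1 : ((1:Ω) ⊗ₜ[k] P y) * ((1:Ω) ⊗ₜ[k] (m * d (b:Ω) * y'))
            = ((1:Ω) ⊗ₜ[k] ((P y * m) * d (b:Ω) * y')) := by
          rw [Algebra.TensorProduct.tmul_mul_tmul, one_mul, ← mul_assoc, ← mul_assoc]
        rw [mul_assoc, e1, ihx (P y * m) b y', mul_assoc, ihy m b y',
          mul_zero, add_zero]
  have KD : ∀ y x : Ω, (i (P x) + sg k Ω P (i x)) * ((1:Ω) ⊗ₜ[k] d y) = 0 := by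
    have Q : ∀ y x m y' : Ω,
        (i (P x) + sg k Ω P (i x)) * ((1:Ω) ⊗ₜ[k] (m * d y * y')) = 0 := by
      intro y
      induction hmem y using Algebra.adjoin_induction with
      | mem g hg =>
          intro x m y'
          rcases hg with hA | ⟨x0, hx0, rfl⟩
          · exact KW x m ⟨g, hA⟩ y'
          · rw [hdd x0, mul_zero, zero_mul, tmul_zero, mul_zero]
      | algebraMap r =>
          intro x m y'
          rw [d_alg r, mul_zero, zero_mul, tmul_zero, mul_zero]
      | add y₁ y₂ _ _ ih1 ih2 =>
          intro x m y'
          rw [map_add d]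
          have : m * (d y₁ + d y₂) * y' = m * d y₁ * y' + m * d y₂ * y' := by
            rw [mul_add, add_mul]
          rw [this, tmul_add, mul_add, ih1 x m y', ih2 x m y', add_zero]
      | mul y₁ y₂ _ _ ih1 ih2 =>
          intro x m y'
          rw [hdDer y₁ y₂]
          have : m * (d y₁ * y₂ + P y₁ * d y₂) * y'
              = m * d y₁ * (y₂ * y') + (m * P y₁) * d y₂ * y' := by
            noncomm_ring
          rw [this, tmul_add, mul_add, ih1 x m (y₂ * y'), ih2 x (m * P y₁) y', add_zero]
    intro y x
    have h := Q y x 1 1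
    rwa [one_mul, mul_one] at h
  have cartan : ∀ x : Ω, dTensor k Ω P d (i x) + i (d x) = L x := by
    intro x
    induction hmem x using Algebra.adjoin_induction with
    | mem g hg =>
        rcases hg with hA | ⟨x0, hx0, rfl⟩
        · rw [show i g = 0 from hiA ⟨g, hA⟩, map_zero, zero_add,
            show i (d g) = Θ ⟨g, hA⟩ from hid ⟨g, hA⟩,
            show L g = Θ ⟨g, hA⟩ from hLA ⟨g, hA⟩]
        · rw [hdd x0, map_zero, add_zero,
            show i (d x0) = Θ ⟨x0, hx0⟩ from hid ⟨x0, hx0⟩,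
            show L (d x0) = dTensor k Ω P d (Θ ⟨x0, hx0⟩) from hLd ⟨x0, hx0⟩]
    | algebraMap r =>
        rw [i_alg r, map_zero, d_alg r, map_zero, add_zero, L_alg r]
    | add x y _ _ ihx ihy =>
        rw [map_add i, map_add (dTensor k Ω P d), map_add d, map_add i, map_add L, ← ihx, ← ihy]
        abel
    | mul x y _ _ ihx ihy =>
        calc dTensor k Ω P d (i (x*y)) + i (d (x*y))
            = (dTensor k Ω P d (i x) + i (d x)) * ((1:Ω) ⊗ₜ[k] y)
              + (x ⊗ₜ[k] (1:Ω)) * (dTensor k Ω P d (i y) + i (d y))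
              + (i (P x) + sg k Ω P (i x)) * ((1:Ω) ⊗ₜ[k] d y) := by
              rw [hiDer x y, map_add (dTensor k Ω P d), dT_mul_e P d hdDer (i x) y,
                dT_f_mul P d hdDer (i y) (P x), hdDer x y, map_add i,
                hiDer (d x) y, hiDer (P x) (d y), hP2 x, hPd x, neg_tmul, neg_mul,
                add_mul, add_mul, mul_add]
              abel
          _ = L x * ((1:Ω) ⊗ₜ[k] y) + (x ⊗ₜ[k] (1:Ω)) * L y + 0 := by
              rw [ihx, ihy, KD y x]
          _ = L (x*y) := by rw [add_zero, hLDer x y]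
  constructor
  · apply LinearMap.ext; intro x
    simp only [LinearMap.add_apply, LinearMap.coe_comp, Function.comp_apply]
    rw [← flip_dT P d hP2 hdDer hPd (i x), ← map_add, cartan x]
  · apply LinearMap.ext; intro x
    simp only [LinearMap.coe_comp, Function.comp_apply]
    have hc1 : flipMul k Ω P (L x)
        = d (flipMul k Ω P (i x)) + flipMul k Ω P (i (d x)) := by
      rw [← cartan x, map_add, flip_dT P d hP2 hdDer hPd]
    have hc2 : flipMul k Ω P (L (d x))
        = d (flipMul k Ω P (i (d x))) + flipMul k Ω P (i (d (d x))) := by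
      rw [← cartan (d x), map_add, flip_dT P d hP2 hdDer hPd]
    rw [hc1, hc2, hdd x, map_zero, map_zero, add_zero, map_add,
      hdd (flipMul k Ω P (i x)), zero_add]

end Stmt4
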